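/- arXiv:2602.14468 — 7 statements merged into one kernel-verified Lean document; each statement's English description precedes it below -/
import Mathlib

section
/- Let Ω be a measurable space, π a probability measure on Ω, L : Ω → ℝ a measurable function with 0 ≤ L(o) ≤ L_max for π-almost every o, where L_max and B are real numbers with 0 < B < L_max. If ∫ L dπ ≤ B, then (1/B) · ∫ max(L(o) − B, 0) dπ(o) ≤ (L_max − B) / L_max. -/
/-!
On `[0, M]` the convex function `x ↦ max (x - B) 0` lies below its chord through `(0, 0)` and
`(M, M - B)`, i.e. below `x ↦ (M - B) / M * x`. Integrating, the expected clipped cost is at most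
`(M - B) / M` times the expected length, which feasibility bounds by `(M - B) / M * B`.
-/

open MeasureTheory

theorem max_sub_zero_le_chord {x B M : ℝ} (hB : 0 ≤ B) (hBM : B ≤ M) (hx₀ : 0 ≤ x)
    (hxM : x ≤ M) : max (x - B) 0 ≤ (M - B) / M * x := by
  rcases hx₀.trans hxM |>.eq_or_lt with rfl | hM
  · simp [show x = 0 by linarith, show B = 0 by linarith]
  rw [div_mul_eq_mul_div, le_div_iff₀ hM, max_mul_of_nonneg _ _ hM.le, zero_mul]
  exact max_le (by nlinarith [mul_le_mul_of_nonneg_left hxM hB])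
    (mul_nonneg (sub_nonneg.2 hBM) hx₀)

theorem integral_max_sub_zero_le {Ω : Type*} [MeasurableSpace Ω] {μ : Measure Ω}
    [IsFiniteMeasure μ] {L : Ω → ℝ} {B M : ℝ} (hL : AEStronglyMeasurable L μ) (hB : 0 ≤ B)
    (hBM : B ≤ M) (hbdd : ∀ᵐ o ∂μ, 0 ≤ L o ∧ L o ≤ M) :
    ∫ o, max (L o - B) 0 ∂μ ≤ (M - B) / M * ∫ o, L o ∂μ := by
  have hLint : Integrable L μ :=
    .of_bound hL M (hbdd.mono fun o ho ↦ by rw [Real.norm_of_nonneg ho.1]; exact ho.2)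
  rw [← integral_const_mul]
  exact integral_mono_ae (hLint.sub (integrable_const B)).pos_part (hLint.const_mul _)
    (hbdd.mono fun o ho ↦ max_sub_zero_le_chord hB hBM ho.1 ho.2)

/-- Feasibility bound on the expected clipped length cost: if `π` is a probability
measure, `0 ≤ L ≤ L_max` `π`-a.e. with `0 < B < L_max`, and the average length
`∫ L dπ` is at most `B`, then `(1/B)·∫ max (L - B) 0 dπ ≤ (L_max - B)/L_max`. -/
theorem clipped_cost_feasible_bound {Ω : Type*} [MeasurableSpace Ω]
    (π : Measure Ω) [IsProbabilityMeasure π]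
    (L : Ω → ℝ) (hLmeas : Measurable L)
    (Lmax B : ℝ) (hB : 0 < B) (hBLmax : B < Lmax)
    (hbdd : ∀ᵐ o ∂π, 0 ≤ L o ∧ L o ≤ Lmax)
    (hfeas : (∫ o, L o ∂π) ≤ B) :
    (1 / B) * ∫ o, max (L o - B) 0 ∂π ≤ (Lmax - B) / Lmax := by
  have hLmax : 0 < Lmax := hB.trans hBLmax
  have hchord : 0 ≤ (Lmax - B) / Lmax := div_nonneg (sub_nonneg.2 hBLmax.le) hLmax.le
  calc (1 / B) * ∫ o, max (L o - B) 0 ∂π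
      ≤ (1 / B) * ((Lmax - B) / Lmax * ∫ o, L o ∂π) := by
        gcongr
        exact integral_max_sub_zero_le hLmeas.aestronglyMeasurable hB.le hBLmax.le hbdd
    _ ≤ (1 / B) * ((Lmax - B) / Lmax * B) := by gcongr
    _ = (Lmax - B) / Lmax := by field_simp
end

section
/- Let Ω be a measurable space, P a nonempty set of probability measures on Ω (the policy class), r : Ω → ℝ a bounded measurable reward, L : Ω → ℝ a measurable length function, and B > 0. Define R(π) = ∫ r dπ, C̃(π) = (1/B)·∫ (L(o) − B) dπ(o), and C(π) = (1/B)·∫ max(L(o) − B, 0) dπ(o). Let λ♯ ≥ 0 and suppose π♯ ∈ P maximizes π ↦ R(π) − λ♯ · C(π) over all π ∈ P, and that C̃(π♯) ≤ 0. Let π⋆ ∈ P maximize R over {π ∈ P : C̃(π) ≤ 0}. Then 0 ≤ R(π⋆) − R(π♯) ≤ λ♯ · C(π⋆). -/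
open MeasureTheory

/- The optimal feasible policy `π⋆` beats the feasible `π♯`, which gives the lower bound. Conversely,
`π♯` maximizes `R - λ♯ C` and its clipped cost is nonnegative, so
`R(π⋆) - λ♯ C(π⋆) ≤ R(π♯) - λ♯ C(π♯) ≤ R(π♯)`, which is the upper bound. -/

theorem clippedCost_nonneg {Ω : Type*} [MeasurableSpace Ω] (μ : Measure Ω) (L : Ω → ℝ)
    {B : ℝ} (hB : 0 < B) : 0 ≤ (1 / B) * ∫ o, max (L o - B) 0 ∂μ :=
  mul_nonneg (one_div_pos.mpr hB).le (integral_nonneg fun _ => le_max_right _ _)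

theorem reward_gap_bounds_of_isMaxOn_lagrangian {ι : Type*} {P : Set ι} {feasible : ι → Prop}
    {R C : ι → ℝ} {lam : ℝ} (hlam : 0 ≤ lam) {x y : ι} (hxP : x ∈ P)
    (hx_max : IsMaxOn (fun z => R z - lam * C z) P x) (hx_feas : feasible x)
    (hCx : 0 ≤ C x) (hyP : y ∈ P) (hy_opt : ∀ z ∈ P, feasible z → R z ≤ R y) :
    0 ≤ R y - R x ∧ R y - R x ≤ lam * C y := by
  have hRx_le_Ry := hy_opt x hxP hx_feas
  have hlagrangian := isMaxOn_iff.mp hx_max y hyP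
  have hprice_nonneg := mul_nonneg hlam hCx
  constructor <;> linarith

theorem price_of_clipped_cost_general {Ω : Type*} [MeasurableSpace Ω]
    (P : Set (Measure Ω))
    (L : Ω → ℝ)
    (B : ℝ) (hB : 0 < B)
    (R : Measure Ω → ℝ)
    (Ct : Measure Ω → ℝ)
    (C : Measure Ω → ℝ) (hC : ∀ π, C π = (1 / B) * ∫ o, max (L o - B) 0 ∂π)
    (lam : ℝ) (hlam : 0 ≤ lam)
    (πsharp : Measure Ω) (hπsharpP : πsharp ∈ P)
    (hπsharpOpt : ∀ π ∈ P, R π - lam * C π ≤ R πsharp - lam * C πsharp)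
    (hπsharpFeas : Ct πsharp ≤ 0)
    (πstar : Measure Ω) (hπstarP : πstar ∈ P)
    (hπstarOpt : ∀ π ∈ P, Ct π ≤ 0 → R π ≤ R πstar) :
    0 ≤ R πstar - R πsharp ∧ R πstar - R πsharp ≤ lam * C πstar :=
  reward_gap_bounds_of_isMaxOn_lagrangian hlam hπsharpP hπsharpOpt hπsharpFeas
    (hC πsharp ▸ clippedCost_nonneg πsharp L hB) hπstarP hπstarOpt

/-- Price of the clipped cost: if `π♯` maximizes the clipped-cost Lagrangian
`R(π) - λ♯·C(π)` over the policy class `P` and is feasible (`C̃(π♯) ≤ 0`), and `π⋆`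
is an optimal feasible policy, then `0 ≤ R(π⋆) - R(π♯) ≤ λ♯ · C(π⋆)`. -/
theorem price_of_clipped_cost {Ω : Type*} [MeasurableSpace Ω]
    (P : Set (Measure Ω)) (hPne : P.Nonempty)
    (hPprob : ∀ π ∈ P, IsProbabilityMeasure π)
    (r : Ω → ℝ) (hrmeas : Measurable r) (hrbdd : ∃ M : ℝ, ∀ o, |r o| ≤ M)
    (L : Ω → ℝ) (hLmeas : Measurable L)
    (B : ℝ) (hB : 0 < B)
    (R : Measure Ω → ℝ) (hR : ∀ π, R π = ∫ o, r o ∂π)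
    (Ct : Measure Ω → ℝ) (hCt : ∀ π, Ct π = (1 / B) * ∫ o, (L o - B) ∂π)
    (C : Measure Ω → ℝ) (hC : ∀ π, C π = (1 / B) * ∫ o, max (L o - B) 0 ∂π)
    (lam : ℝ) (hlam : 0 ≤ lam)
    (πsharp : Measure Ω) (hπsharpP : πsharp ∈ P)
    (hπsharpOpt : ∀ π ∈ P, R π - lam * C π ≤ R πsharp - lam * C πsharp)
    (hπsharpFeas : Ct πsharp ≤ 0)
    (πstar : Measure Ω) (hπstarP : πstar ∈ P) (hπstarFeas : Ct πstar ≤ 0)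
    (hπstarOpt : ∀ π ∈ P, Ct π ≤ 0 → R π ≤ R πstar) :
    0 ≤ R πstar - R πsharp ∧ R πstar - R πsharp ≤ lam * C πstar :=
  price_of_clipped_cost_general P L B hB R Ct C hC lam hlam πsharp hπsharpP hπsharpOpt hπsharpFeas
    πstar hπstarP hπstarOpt
end

section
/- Let Ω be a measurable space, P a nonempty set of probability measures on Ω (the policy class), r : Ω → ℝ a bounded measurable reward, L : Ω → ℝ a measurable length function, and let B, L_max be real numbers with 0 < B < L_max. Define R(π) = ∫ r dπ, C̃(π) = (1/B)·∫ (L(o) − B) dπ(o), and C(π) = (1/B)·∫ max(L(o) − B, 0) dπ(o). Suppose every π ∈ P satisfies 0 ≤ L(o) ≤ L_max for π-almost every o. Let 0 ≤ λ♯ ≤ B/(L_max − B), suppose π♯ ∈ P maximizes π ↦ R(π) − λ♯ · C(π) over P with C̃(π♯) ≤ 0, and let π⋆ ∈ P maximize R over {π ∈ P : C̃(π) ≤ 0}. Then 0 ≤ R(π⋆) − R(π♯) ≤ B / L_max. -/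
/-!
Feasibility of `π⋆` means its mean length is at most `B`. On `[0, L_max]` the clipped excess
`max (ℓ - B) 0` lies below the chord `(L_max - B) / L_max · ℓ`, so the clipped cost of `π⋆` is at
most `(L_max - B) / L_max`. Comparing Lagrangians, `R(π⋆) - R(π♯) ≤ λ♯ (C(π⋆) - C(π♯)) ≤ λ♯ C(π⋆)`,
and the ceiling `λ♯ ≤ B / (L_max - B)` turns this into `B / L_max`.
-/

open MeasureTheory

theorem max_sub_zero_le_div_mul {x B M : ℝ} (hB : 0 ≤ B) (hBM : B ≤ M) (hx : 0 ≤ x)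
    (hxM : x ≤ M) : max (x - B) 0 ≤ (M - B) / M * x := by
  rcases hBM.eq_or_lt with rfl | hBM
  · simp [sub_nonpos.2 hxM]
  have hM : 0 < M := hB.trans_lt hBM
  refine max_le ?_ (by positivity)
  rw [div_mul_eq_mul_div, le_div_iff₀ hM]
  nlinarith

section ClippedExcess

variable {Ω : Type*} [MeasurableSpace Ω] {μ : Measure Ω} {L : Ω → ℝ} {B M : ℝ}

theorem integrable_of_ae_mem_Icc [IsFiniteMeasure μ] (hL : AEStronglyMeasurable L μ)
    (hbdd : ∀ᵐ o ∂μ, 0 ≤ L o ∧ L o ≤ M) : Integrable L μ :=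
  .of_bound hL M <| hbdd.mono fun _ ho => by
    rw [Real.norm_eq_abs, abs_le]
    exact ⟨by linarith [ho.1, ho.2], ho.2⟩

theorem integral_max_sub_le_div_mul_integral [IsFiniteMeasure μ]
    (hL : AEStronglyMeasurable L μ) (hB : 0 ≤ B) (hBM : B ≤ M)
    (hbdd : ∀ᵐ o ∂μ, 0 ≤ L o ∧ L o ≤ M) :
    ∫ o, max (L o - B) 0 ∂μ ≤ (M - B) / M * ∫ o, L o ∂μ := by
  have hLint := integrable_of_ae_mem_Icc hL hbdd
  rw [← integral_const_mul]
  exact integral_mono_ae (hLint.sub (integrable_const B)).pos_part (hLint.const_mul _)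
    (hbdd.mono fun _ ho => max_sub_zero_le_div_mul hB hBM ho.1 ho.2)

theorem integral_max_sub_le_of_integral_sub_nonpos [IsProbabilityMeasure μ]
    (hL : AEStronglyMeasurable L μ) (hB : 0 ≤ B) (hBM : B ≤ M)
    (hbdd : ∀ᵐ o ∂μ, 0 ≤ L o ∧ L o ≤ M) (hmean : ∫ o, (L o - B) ∂μ ≤ 0) :
    ∫ o, max (L o - B) 0 ∂μ ≤ (M - B) / M * B := by
  have hLint := integrable_of_ae_mem_Icc hL hbdd
  have hmean' : ∫ o, L o ∂μ ≤ B := by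
    rw [integral_sub hLint (integrable_const B), integral_const] at hmean
    simpa [sub_nonpos] using hmean
  calc ∫ o, max (L o - B) 0 ∂μ ≤ (M - B) / M * ∫ o, L o ∂μ :=
        integral_max_sub_le_div_mul_integral hL hB hBM hbdd
    _ ≤ (M - B) / M * B := by
        gcongr
        exact div_nonneg (sub_nonneg.2 hBM) (hB.trans hBM)

end ClippedExcess

theorem price_of_clipped_cost_ceiling_general {Ω : Type*} [MeasurableSpace Ω]
    (P : Set (Measure Ω))
    (hPprob : ∀ π ∈ P, IsProbabilityMeasure π)
    (L : Ω → ℝ) (hLmeas : Measurable L)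
    (B Lmax : ℝ) (hB : 0 < B) (hBLmax : B < Lmax)
    (R : Measure Ω → ℝ)
    (Ct : Measure Ω → ℝ) (hCt : ∀ π, Ct π = (1 / B) * ∫ o, (L o - B) ∂π)
    (C : Measure Ω → ℝ) (hC : ∀ π, C π = (1 / B) * ∫ o, max (L o - B) 0 ∂π)
    (hLbdd : ∀ π ∈ P, ∀ᵐ o ∂π, 0 ≤ L o ∧ L o ≤ Lmax)
    (lam : ℝ) (hlam0 : 0 ≤ lam) (hlamceil : lam ≤ B / (Lmax - B))
    (πsharp : Measure Ω) (hπsharpP : πsharp ∈ P)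
    (hπsharpOpt : ∀ π ∈ P, R π - lam * C π ≤ R πsharp - lam * C πsharp)
    (hπsharpFeas : Ct πsharp ≤ 0)
    (πstar : Measure Ω) (hπstarP : πstar ∈ P) (hπstarFeas : Ct πstar ≤ 0)
    (hπstarOpt : ∀ π ∈ P, Ct π ≤ 0 → R π ≤ R πstar) :
    0 ≤ R πstar - R πsharp ∧ R πstar - R πsharp ≤ B / Lmax := by
  have : IsProbabilityMeasure πstar := hPprob πstar hπstarP
  refine ⟨sub_nonneg.2 (hπstarOpt πsharp hπsharpP hπsharpFeas), ?_⟩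
  have hCnonneg : ∀ π, 0 ≤ C π := fun π => by
    rw [hC]
    exact mul_nonneg (by positivity) (integral_nonneg fun _ => le_max_right _ _)
  have hmean : ∫ o, (L o - B) ∂πstar ≤ 0 :=
    nonpos_of_mul_nonpos_right (hCt πstar ▸ hπstarFeas) (by positivity)
  have hCstar : C πstar ≤ (Lmax - B) / Lmax := by
    have := integral_max_sub_le_of_integral_sub_nonpos hLmeas.aestronglyMeasurable hB.le
      hBLmax.le (hLbdd πstar hπstarP) hmean
    rw [hC, one_div, inv_mul_le_iff₀ hB]
    linarith
  calc R πstar - R πsharp ≤ lam * C πstar := by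
        linarith [hπsharpOpt πstar hπstarP, mul_nonneg hlam0 (hCnonneg πsharp)]
    _ ≤ B / (Lmax - B) * ((Lmax - B) / Lmax) :=
        mul_le_mul hlamceil hCstar (hCnonneg πstar) (div_nonneg hB.le (sub_pos.2 hBLmax).le)
    _ = B / Lmax := by
        field_simp [(sub_pos.2 hBLmax).ne']

/-- Ceiling-based price of the clipped cost: with lengths bounded in `[0, L_max]`
a.e. for every policy in the class, a dual multiplier `0 ≤ λ♯ ≤ B/(L_max - B)`,
a feasible maximizer `π♯` of the clipped-cost Lagrangian, and an optimal feasible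
policy `π⋆`, we have `0 ≤ R(π⋆) - R(π♯) ≤ B / L_max`. -/
theorem price_of_clipped_cost_ceiling {Ω : Type*} [MeasurableSpace Ω]
    (P : Set (Measure Ω)) (hPne : P.Nonempty)
    (hPprob : ∀ π ∈ P, IsProbabilityMeasure π)
    (r : Ω → ℝ) (hrmeas : Measurable r) (hrbdd : ∃ M : ℝ, ∀ o, |r o| ≤ M)
    (L : Ω → ℝ) (hLmeas : Measurable L)
    (B Lmax : ℝ) (hB : 0 < B) (hBLmax : B < Lmax)
    (R : Measure Ω → ℝ) (hR : ∀ π, R π = ∫ o, r o ∂π)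
    (Ct : Measure Ω → ℝ) (hCt : ∀ π, Ct π = (1 / B) * ∫ o, (L o - B) ∂π)
    (C : Measure Ω → ℝ) (hC : ∀ π, C π = (1 / B) * ∫ o, max (L o - B) 0 ∂π)
    (hLbdd : ∀ π ∈ P, ∀ᵐ o ∂π, 0 ≤ L o ∧ L o ≤ Lmax)
    (lam : ℝ) (hlam0 : 0 ≤ lam) (hlamceil : lam ≤ B / (Lmax - B))
    (πsharp : Measure Ω) (hπsharpP : πsharp ∈ P)
    (hπsharpOpt : ∀ π ∈ P, R π - lam * C π ≤ R πsharp - lam * C πsharp)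
    (hπsharpFeas : Ct πsharp ≤ 0)
    (πstar : Measure Ω) (hπstarP : πstar ∈ P) (hπstarFeas : Ct πstar ≤ 0)
    (hπstarOpt : ∀ π ∈ P, Ct π ≤ 0 → R π ≤ R πstar) :
    0 ≤ R πstar - R πsharp ∧ R πstar - R πsharp ≤ B / Lmax :=
  price_of_clipped_cost_ceiling_general P hPprob L hLmeas B Lmax hB hBLmax R Ct hCt C hC hLbdd lam
    hlam0 hlamceil πsharp hπsharpP hπsharpOpt hπsharpFeas πstar hπstarP hπstarFeas hπstarOpt
end

section
/- Let Λ > 0, γ > 0, and 0 < η ≤ 1/γ. Let μ : ℝ → ℝ be nonincreasing on [0, Λ] and satisfy |μ(λ) − μ(λ')| ≤ γ·|λ − λ'| for all λ, λ' ∈ [0, Λ]. Define T(λ) = max(min(λ + η·μ(λ), Λ), 0). Then for every fixed point λ♯ ∈ [0, Λ] of T and every λ ∈ [0, Λ], |T(λ) − λ♯| ≤ |λ − λ♯|. -/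
/-! Below the threshold `η ≤ 1/γ` the unclipped step `λ ↦ λ + η μ(λ)` is nondecreasing (the
Lipschitz bound on `μ` cannot overcome the identity) and, `μ` being nonincreasing, it moves points
no further apart: it is `1`-Lipschitz on `[0, Λ]`. Clipping to `[0, Λ]` is `1`-Lipschitz too, so
`T` is nonexpansive there, and comparing with `T λ♯ = λ♯` gives Fejér monotonicity. -/

section

variable {s : Set ℝ} {f : ℝ → ℝ} {γ η : ℝ}

theorem sub_add_mul_sub_mem_Icc_of_antitoneOn (hmono : AntitoneOn f s)
    (hlip : ∀ a ∈ s, ∀ b ∈ s, |f a - f b| ≤ γ * |a - b|) (hη : 0 ≤ η) (hηγ : η * γ ≤ 1)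
    {x y : ℝ} (hx : x ∈ s) (hy : y ∈ s) (hyx : y ≤ x) :
    (x + η * f x) - (y + η * f y) ∈ Set.Icc 0 (x - y) := by
  have hdecr : f x ≤ f y := hmono hy hx hyx
  have hdrop : f y - f x ≤ γ * (x - y) := by
    simpa [abs_of_nonneg (sub_nonneg.2 hdecr), abs_sub_comm y x, abs_of_nonneg (sub_nonneg.2 hyx)]
      using hlip y hy x hx
  constructor <;> nlinarith

theorem abs_add_mul_sub_add_mul_le_of_antitoneOn (hmono : AntitoneOn f s)
    (hlip : ∀ a ∈ s, ∀ b ∈ s, |f a - f b| ≤ γ * |a - b|) (hη : 0 ≤ η) (hηγ : η * γ ≤ 1)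
    {x y : ℝ} (hx : x ∈ s) (hy : y ∈ s) :
    |(x + η * f x) - (y + η * f y)| ≤ |x - y| := by
  wlog hyx : y ≤ x generalizing x y
  · rw [abs_sub_comm, abs_sub_comm x]
    exact this hy hx (le_of_not_ge hyx)
  obtain ⟨hlo, hhi⟩ := sub_add_mul_sub_mem_Icc_of_antitoneOn hmono hlip hη hηγ hx hy hyx
  rw [abs_of_nonneg hlo, abs_of_nonneg (sub_nonneg.2 hyx)]
  exact hhi

end

theorem abs_max_min_sub_max_min_le (a b c d : ℝ) :
    |max (min a c) d - max (min b c) d| ≤ |a - b| :=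
  calc |max (min a c) d - max (min b c) d|
      ≤ |min a c - min b c| := abs_max_sub_max_le_abs _ _ _
    _ ≤ |a - b| := by simpa using abs_min_sub_min_le_max a c b c

theorem dual_update_fejer_general (Λ γ η : ℝ) (hγ : 0 < γ)
    (hη : 0 < η) (hηγ : η ≤ 1 / γ)
    (μ : ℝ → ℝ) (hmono : AntitoneOn μ (Set.Icc 0 Λ))
    (hlip : ∀ a ∈ Set.Icc (0:ℝ) Λ, ∀ b ∈ Set.Icc (0:ℝ) Λ, |μ a - μ b| ≤ γ * |a - b|)
    (T : ℝ → ℝ) (hT : ∀ x, T x = max (min (x + η * μ x) Λ) 0)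
    (lamsharp : ℝ) (hsharp : lamsharp ∈ Set.Icc 0 Λ) (hfix : T lamsharp = lamsharp)
    (lam : ℝ) (hlam : lam ∈ Set.Icc 0 Λ) :
    |T lam - lamsharp| ≤ |lam - lamsharp| := by
  have hηγ' : η * γ ≤ 1 := (le_div_iff₀ hγ).1 hηγ
  calc |T lam - lamsharp| = |T lam - T lamsharp| := by rw [hfix]
    _ ≤ |(lam + η * μ lam) - (lamsharp + η * μ lamsharp)| := by
      rw [hT, hT]; exact abs_max_min_sub_max_min_le _ _ _ _
    _ ≤ |lam - lamsharp| :=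
      abs_add_mul_sub_add_mul_le_of_antitoneOn hmono hlip hη.le hηγ' hlam hsharp

/-- Fejér monotonicity of the projected dual update: with `μ` nonincreasing and
`γ`-Lipschitz on `[0, Λ]` and step size `0 < η ≤ 1/γ`, one dual update
`T(λ) = clip(λ + η·μ(λ), 0, Λ)` does not increase the distance to any fixed point
`λ♯ ∈ [0, Λ]` of `T`. -/
theorem dual_update_fejer (Λ γ η : ℝ) (hΛ : 0 < Λ) (hγ : 0 < γ)
    (hη : 0 < η) (hηγ : η ≤ 1 / γ)
    (μ : ℝ → ℝ) (hmono : AntitoneOn μ (Set.Icc 0 Λ))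
    (hlip : ∀ a ∈ Set.Icc (0:ℝ) Λ, ∀ b ∈ Set.Icc (0:ℝ) Λ, |μ a - μ b| ≤ γ * |a - b|)
    (T : ℝ → ℝ) (hT : ∀ x, T x = max (min (x + η * μ x) Λ) 0)
    (lamsharp : ℝ) (hsharp : lamsharp ∈ Set.Icc 0 Λ) (hfix : T lamsharp = lamsharp)
    (lam : ℝ) (hlam : lam ∈ Set.Icc 0 Λ) :
    |T lam - lamsharp| ≤ |lam - lamsharp| :=
  dual_update_fejer_general Λ γ η hγ hη hηγ μ hmono hlip T hT lamsharp hsharp hfix lam hlam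
end

section
/- Let Λ > 0, γ > 0, and 0 < η ≤ 1/γ. Let μ : ℝ → ℝ be nonincreasing on [0, Λ], satisfy |μ(λ) − μ(λ')| ≤ γ·|λ − λ'| for all λ, λ' ∈ [0, Λ], and satisfy μ(Λ) ≤ 0. Define T(λ) = max(min(λ + η·μ(λ), Λ), 0), and for any λ₀ ∈ [0, Λ] let the sequence (λ_t) be defined by λ_{t+1} = T(λ_t). Then (λ_t) converges to some λ♯ ∈ [0, Λ] with T(λ♯) = λ♯ (and hence μ(λ♯) ≤ 0). -/
/-!
Because `μ` is `γ`-Lipschitz and `η γ ≤ 1`, the map `x ↦ x + η μ(x)` is nondecreasing on `[0, Λ]`,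
and so is its clip `T`. A monotone self-map of an interval has monotone orbits (nondecreasing or
nonincreasing according to the sign of `T λ₀ - λ₀`), which are bounded and hence converge, and by
continuity of `T` the limit is a fixed point. At a fixed point `λ♯ < Λ` a positive `μ(λ♯)` would push
`T λ♯` above `λ♯`, while at `λ♯ = Λ` we have `μ(Λ) ≤ 0` by assumption.
-/

open Set Filter Topology Function

theorem LipschitzOnWith.monotoneOn_add_mul {f : ℝ → ℝ} {s : Set ℝ} {K : NNReal} {η : ℝ}
    (hf : LipschitzOnWith K f s) (hη : 0 ≤ η) (hηK : η * K ≤ 1) :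
    MonotoneOn (fun x => x + η * f x) s := by
  intro a ha b hb hab
  have hdist : f a - f b ≤ K * (b - a) := by
    have := hf.dist_le_mul a ha b hb
    rw [Real.dist_eq, Real.dist_eq, abs_sub_comm a, abs_of_nonneg (sub_nonneg.2 hab)] at this
    exact (le_abs_self _).trans this
  have hdrift : η * (f a - f b) ≤ b - a :=
    calc η * (f a - f b) ≤ η * (K * (b - a)) := mul_le_mul_of_nonneg_left hdist hη
      _ = (η * K) * (b - a) := by ring
      _ ≤ b - a := mul_le_of_le_one_left (sub_nonneg.2 hab) hηK
  dsimp only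
  linarith

section MonotoneOrbit

variable {α : Type*} [ConditionallyCompleteLinearOrder α] [TopologicalSpace α] [OrderTopology α]

theorem Monotone.exists_tendsto_iterate_isFixedPt {f : α → α} (hf : Monotone f)
    (hcont : Continuous f) {a b x : α} (hmaps : MapsTo f (Icc a b) (Icc a b))
    (hx : x ∈ Icc a b) :
    ∃ y ∈ Icc a b, Tendsto (fun n => f^[n] x) atTop (𝓝 y) ∧ IsFixedPt f y := by
  have horbit : ∀ n, f^[n] x ∈ Icc a b := fun n => hmaps.iterate n hx
  have hlim : ∃ y, Tendsto (fun n => f^[n] x) atTop (𝓝 y) := by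
    rcases le_total x (f x) with hxf | hfx
    · exact ⟨_, tendsto_atTop_ciSup (hf.monotone_iterate_of_le_map hxf)
        ⟨b, forall_mem_range.2 fun n => (horbit n).2⟩⟩
    · exact ⟨_, tendsto_atTop_ciInf (hf.antitone_iterate_of_map_le hfx)
        ⟨a, forall_mem_range.2 fun n => (horbit n).1⟩⟩
  obtain ⟨y, hy⟩ := hlim
  exact ⟨y, isClosed_Icc.mem_of_tendsto hy (Eventually.of_forall horbit), hy,
    isFixedPt_of_tendsto_iterate hy hcont.continuousAt⟩

theorem MonotoneOn.exists_tendsto_of_recurrence {f : α → α} {a b : α} (hab : a ≤ b)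
    (hf : MonotoneOn f (Icc a b)) (hcont : ContinuousOn f (Icc a b))
    (hmaps : MapsTo f (Icc a b) (Icc a b)) {u : ℕ → α} (hu0 : u 0 ∈ Icc a b)
    (hu : ∀ n, u (n + 1) = f (u n)) :
    ∃ y ∈ Icc a b, Tendsto u atTop (𝓝 y) ∧ f y = y := by
  -- `f ∘ projIcc a b` agrees with `f` on `[a, b]` and is monotone and continuous everywhere.
  set g : α → α := fun x => f (projIcc a b hab x)
  have hg_eq : EqOn g f (Icc a b) := fun x hx => by simp only [g, projIcc_of_mem hab hx]
  have hg_mono : Monotone g := fun x y hxy =>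
    hf (projIcc a b hab x).2 (projIcc a b hab y).2 (monotone_projIcc hab hxy)
  have hg_cont : Continuous g :=
    hcont.comp_continuous (continuous_subtype_val.comp continuous_projIcc)
      fun x => (projIcc a b hab x).2
  have hg_maps : MapsTo g (Icc a b) (Icc a b) := fun x hx => hg_eq hx ▸ hmaps hx
  have hu_iter : u = fun n => g^[n] (u 0) := by
    funext n
    induction n with
    | zero => rfl
    | succ n ih =>
      rw [hu, iterate_succ_apply', ← ih]
      exact (hg_eq (ih ▸ hg_maps.iterate n hu0)).symm
  obtain ⟨y, hy, hlim, hfix⟩ := hg_mono.exists_tendsto_iterate_isFixedPt hg_cont hg_maps hu0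
  exact ⟨y, hy, hu_iter ▸ hlim, (hg_eq hy).symm.trans hfix⟩

end MonotoneOrbit

section DualStep

variable {Λ η : ℝ} {μ : ℝ → ℝ}

def dualStep (Λ η : ℝ) (μ : ℝ → ℝ) (x : ℝ) : ℝ := max (min (x + η * μ x) Λ) 0

theorem dualStep_mem_Icc (hΛ : 0 ≤ Λ) (x : ℝ) : dualStep Λ η μ x ∈ Icc 0 Λ :=
  ⟨le_max_right _ _, max_le (min_le_right _ _) hΛ⟩

theorem monotoneOn_dualStep {s : Set ℝ} {K : NNReal} (hμ : LipschitzOnWith K μ s) (hη : 0 ≤ η)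
    (hηK : η * K ≤ 1) : MonotoneOn (dualStep Λ η μ) s :=
  ((monotone_id.min monotone_const).max monotone_const).comp_monotoneOn
    (hμ.monotoneOn_add_mul hη hηK)

theorem continuousOn_dualStep {s : Set ℝ} (hμ : ContinuousOn μ s) :
    ContinuousOn (dualStep Λ η μ) s := by
  unfold dualStep
  fun_prop

theorem nonpos_of_dualStep_eq_self (hη : 0 < η) (hμΛ : μ Λ ≤ 0) {x : ℝ} (hxΛ : x ≤ Λ)
    (hfix : dualStep Λ η μ x = x) : μ x ≤ 0 := by
  by_contra! hpos
  rcases hxΛ.eq_or_lt with rfl | hxΛ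
  · exact hpos.not_ge hμΛ
  · have hpush : x < min (x + η * μ x) Λ := lt_min (lt_add_of_pos_right x (mul_pos hη hpos)) hxΛ
    exact (hpush.trans_le (le_max_left _ _)).ne' hfix

end DualStep

theorem dual_update_converges_general (Λ γ η : ℝ) (hΛ : 0 < Λ) (hγ : 0 < γ)
    (hη : 0 < η) (hηγ : η ≤ 1 / γ)
    (μ : ℝ → ℝ)
    (hlip : ∀ a ∈ Set.Icc (0:ℝ) Λ, ∀ b ∈ Set.Icc (0:ℝ) Λ, |μ a - μ b| ≤ γ * |a - b|)
    (hμΛ : μ Λ ≤ 0)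
    (T : ℝ → ℝ) (hT : ∀ x, T x = max (min (x + η * μ x) Λ) 0)
    (lam : ℕ → ℝ) (hlam0 : lam 0 ∈ Set.Icc 0 Λ)
    (hstep : ∀ t, lam (t + 1) = T (lam t)) :
    ∃ lamsharp ∈ Set.Icc (0:ℝ) Λ,
      Filter.Tendsto lam Filter.atTop (nhds lamsharp) ∧
      T lamsharp = lamsharp ∧ μ lamsharp ≤ 0 := by
  obtain rfl : T = dualStep Λ η μ := funext hT
  have hμ : LipschitzOnWith γ.toNNReal μ (Icc 0 Λ) := .of_dist_le_mul fun a ha b hb => by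
    simpa only [Real.dist_eq, Real.coe_toNNReal γ hγ.le] using hlip a ha b hb
  have hηγ' : η * γ.toNNReal ≤ 1 := by
    rw [Real.coe_toNNReal γ hγ.le]
    exact (le_div_iff₀ hγ).1 hηγ
  obtain ⟨L, hL, hlim, hfix⟩ := MonotoneOn.exists_tendsto_of_recurrence hΛ.le
    (monotoneOn_dualStep hμ hη.le hηγ') (continuousOn_dualStep hμ.continuousOn)
    (fun x _ => dualStep_mem_Icc hΛ.le x) hlam0 hstep
  exact ⟨L, hL, hlim, hfix, nonpos_of_dualStep_eq_self hη hμΛ hL.2 hfix⟩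

/-- Convergence of the projected dual iterates: with `μ` nonincreasing and
`γ`-Lipschitz on `[0, Λ]`, `μ(Λ) ≤ 0`, and step size `0 < η ≤ 1/γ`, the iterates
`λ_{t+1} = T(λ_t)` of `T(λ) = clip(λ + η·μ(λ), 0, Λ)` started at any `λ₀ ∈ [0, Λ]`
converge to a fixed point `λ♯ ∈ [0, Λ]` of `T`, which moreover satisfies `μ(λ♯) ≤ 0`. -/
theorem dual_update_converges (Λ γ η : ℝ) (hΛ : 0 < Λ) (hγ : 0 < γ)
    (hη : 0 < η) (hηγ : η ≤ 1 / γ)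
    (μ : ℝ → ℝ) (hmono : AntitoneOn μ (Set.Icc 0 Λ))
    (hlip : ∀ a ∈ Set.Icc (0:ℝ) Λ, ∀ b ∈ Set.Icc (0:ℝ) Λ, |μ a - μ b| ≤ γ * |a - b|)
    (hμΛ : μ Λ ≤ 0)
    (T : ℝ → ℝ) (hT : ∀ x, T x = max (min (x + η * μ x) Λ) 0)
    (lam : ℕ → ℝ) (hlam0 : lam 0 ∈ Set.Icc 0 Λ)
    (hstep : ∀ t, lam (t + 1) = T (lam t)) :
    ∃ lamsharp ∈ Set.Icc (0:ℝ) Λ,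
      Filter.Tendsto lam Filter.atTop (nhds lamsharp) ∧
      T lamsharp = lamsharp ∧ μ lamsharp ≤ 0 :=
  dual_update_converges_general Λ γ η hΛ hγ hη hηγ μ hlip hμΛ T hT lam hlam0 hstep
end

section
/- Let Λ > 0, γ > 0, ξ > 0, and 0 < η ≤ min(1/γ, 1/ξ). Let μ : ℝ → ℝ satisfy |μ(λ) − μ(λ')| ≤ γ·|λ − λ'| for all λ, λ' ∈ [0, Λ], and μ(λ) − μ(λ') ≤ −ξ·(λ − λ') for all λ ≥ λ' in [0, Λ]. Suppose λ♯ ∈ [0, Λ] satisfies μ(λ♯) = 0. Define T(λ) = max(min(λ + η·μ(λ), Λ), 0), let λ₀ ∈ [0, Λ], and let λ_{t+1} = T(λ_t). Then for every t ≥ 0, |λ_t − λ♯| ≤ (1 − η·ξ)^t · |λ₀ − λ♯|. -/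
/-! The unclipped update `λ ↦ λ + η μ(λ)` is a `(1 - ηξ)`-contraction on `[0, Λ]`: strong
monotonicity pulls the two images together by at least `ηξ |λ - λ'|`, and since `ηγ ≤ 1` the
Lipschitz bound keeps them from crossing over. Clipping to `[0, Λ]` is nonexpansive and fixes
`λ♯`, so each step shrinks the distance to `λ♯` by the factor `1 - ηξ`. -/

lemma mul_le_one_of_le_one_div {η γ : ℝ} (hη : 0 < η) (h : η ≤ 1 / γ) : η * γ ≤ 1 :=
  (le_div_iff₀ (one_div_pos.mp (hη.trans_le h))).mp h

lemma abs_max_min_sub_max_min_le_abs {α : Type*} [AddCommGroup α] [LinearOrder α]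
    [IsOrderedAddMonoid α] (lo hi x y : α) :
    |max (min x hi) lo - max (min y hi) lo| ≤ |x - y| := by
  refine (abs_max_sub_max_le_abs _ _ lo).trans ?_
  simpa only [sub_self, abs_zero, max_eq_left (abs_nonneg (x - y))]
    using abs_min_sub_min_le_max x hi y hi

lemma abs_add_mul_sub_add_mul_le {s : Set ℝ} {μ : ℝ → ℝ} {γ ξ η : ℝ} (hη : 0 ≤ η)
    (hηγ : η * γ ≤ 1)
    (hlip : ∀ a ∈ s, ∀ b ∈ s, |μ a - μ b| ≤ γ * |a - b|)
    (hsm : ∀ a ∈ s, ∀ b ∈ s, b ≤ a → μ a - μ b ≤ -ξ * (a - b))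
    {a b : ℝ} (ha : a ∈ s) (hb : b ∈ s) :
    |(a + η * μ a) - (b + η * μ b)| ≤ (1 - η * ξ) * |a - b| := by
  wlog hba : b ≤ a generalizing a b
  · rw [abs_sub_comm, abs_sub_comm a]
    exact this hb ha (le_of_not_ge hba)
  have hlower := neg_le_of_abs_le (hlip a ha b hb)
  have hupper := hsm a ha b hb hba
  rw [abs_of_nonneg (sub_nonneg.2 hba)] at hlower ⊢
  rw [abs_le]
  constructor <;> nlinarith

theorem dual_update_linear_rate_general (Λ γ ξ η : ℝ)
    (hη : 0 < η) (hηmin : η ≤ min (1 / γ) (1 / ξ))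
    (μ : ℝ → ℝ)
    (hlip : ∀ a ∈ Set.Icc (0:ℝ) Λ, ∀ b ∈ Set.Icc (0:ℝ) Λ, |μ a - μ b| ≤ γ * |a - b|)
    (hsm : ∀ a ∈ Set.Icc (0:ℝ) Λ, ∀ b ∈ Set.Icc (0:ℝ) Λ, b ≤ a →
      μ a - μ b ≤ -ξ * (a - b))
    (lamsharp : ℝ) (hsharp : lamsharp ∈ Set.Icc 0 Λ) (hzero : μ lamsharp = 0)
    (T : ℝ → ℝ) (hT : ∀ x, T x = max (min (x + η * μ x) Λ) 0)
    (lam : ℕ → ℝ) (hlam0 : lam 0 ∈ Set.Icc 0 Λ)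
    (hstep : ∀ t, lam (t + 1) = T (lam t)) :
    ∀ t : ℕ, |lam t - lamsharp| ≤ (1 - η * ξ) ^ t * |lam 0 - lamsharp| := by
  have hηγ := mul_le_one_of_le_one_div hη (hηmin.trans (min_le_left _ _))
  have hηξ := mul_le_one_of_le_one_div hη (hηmin.trans (min_le_right _ _))
  have hmaps (x : ℝ) : T x ∈ Set.Icc 0 Λ :=
    hT x ▸ ⟨le_max_right _ _, max_le (min_le_right _ _) (hsharp.1.trans hsharp.2)⟩
  have hfix : T lamsharp = lamsharp := by
    rw [hT, hzero, mul_zero, add_zero, min_eq_left hsharp.2, max_eq_left hsharp.1]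
  have hmem : ∀ t, lam t ∈ Set.Icc 0 Λ
    | 0 => hlam0
    | t + 1 => hstep t ▸ hmaps _
  intro t
  refine le_geom (u := fun t => |lam t - lamsharp|)
    (sub_nonneg.2 hηξ) t fun k _ => ?_
  calc |lam (k + 1) - lamsharp| = |T (lam k) - T lamsharp| := by rw [hstep, hfix]
    _ ≤ |(lam k + η * μ (lam k)) - (lamsharp + η * μ lamsharp)| := by
      rw [hT, hT]; exact abs_max_min_sub_max_min_le_abs _ _ _ _
    _ ≤ (1 - η * ξ) * |lam k - lamsharp| :=
      abs_add_mul_sub_add_mul_le hη.le hηγ hlip hsm (hmem k) hsharp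

/-- Geometric convergence of the dual iterates: with `μ` `γ`-Lipschitz and
`ξ`-strongly decreasing on `[0, Λ]`, step size `0 < η ≤ min(1/γ, 1/ξ)`, and
`λ♯ ∈ [0, Λ]` with `μ(λ♯) = 0`, the iterates `λ_{t+1} = T(λ_t)` of the projected
update `T(λ) = clip(λ + η·μ(λ), 0, Λ)` satisfy
`|λ_t - λ♯| ≤ (1 - η·ξ)^t · |λ₀ - λ♯|`. -/
theorem dual_update_linear_rate (Λ γ ξ η : ℝ) (hΛ : 0 < Λ) (hγ : 0 < γ) (hξ : 0 < ξ)
    (hη : 0 < η) (hηmin : η ≤ min (1 / γ) (1 / ξ))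
    (μ : ℝ → ℝ)
    (hlip : ∀ a ∈ Set.Icc (0:ℝ) Λ, ∀ b ∈ Set.Icc (0:ℝ) Λ, |μ a - μ b| ≤ γ * |a - b|)
    (hsm : ∀ a ∈ Set.Icc (0:ℝ) Λ, ∀ b ∈ Set.Icc (0:ℝ) Λ, b ≤ a →
      μ a - μ b ≤ -ξ * (a - b))
    (lamsharp : ℝ) (hsharp : lamsharp ∈ Set.Icc 0 Λ) (hzero : μ lamsharp = 0)
    (T : ℝ → ℝ) (hT : ∀ x, T x = max (min (x + η * μ x) Λ) 0)
    (lam : ℕ → ℝ) (hlam0 : lam 0 ∈ Set.Icc 0 Λ)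
    (hstep : ∀ t, lam (t + 1) = T (lam t)) :
    ∀ t : ℕ, |lam t - lamsharp| ≤ (1 - η * ξ) ^ t * |lam 0 - lamsharp| :=
  dual_update_linear_rate_general Λ γ ξ η hη hηmin μ hlip hsm lamsharp hsharp hzero T hT lam hlam0
    hstep
end

section
/- Let Λ > 0, γ > 0, ξ > 0, and 0 < η ≤ min(1/γ, 1/ξ). Let μ : ℝ → ℝ satisfy |μ(λ) − μ(λ')| ≤ γ·|λ − λ'| for all λ, λ' ∈ [0, Λ], and μ(λ) − μ(λ') ≤ −ξ·(λ − λ') for all λ ≥ λ' in [0, Λ]. Suppose λ♯ ∈ [0, Λ] satisfies μ(λ♯) = 0. Define T(λ) = max(min(λ + η·μ(λ), Λ), 0), let λ₀ ∈ [0, Λ], and let λ_{t+1} = T(λ_t). Then for every t ≥ 0, |μ(λ_t)| ≤ γ·(1 − η·ξ)^t · |λ₀ − λ♯|. -/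
/-!
The multiplier `λ♯` is a fixed point of `T`, and `T` contracts towards it: clipping is
1-Lipschitz, and on `[0, Λ]` the unclipped step `λ ↦ λ + η μ(λ)` moves `λ` towards `λ♯` by at
least `η ξ |λ - λ♯|` (strong monotonicity) without overshooting it (Lipschitz bound and
`η γ ≤ 1`). Hence `|λ_t - λ♯| ≤ (1 - η ξ)^t |λ₀ - λ♯|`, and the Lipschitz bound at `λ♯`,
where `μ` vanishes, turns this into the bound on `|μ(λ_t)|`.
-/

open Set

section Clip

variable {α : Type*} [LinearOrder α] {a b : α}

theorem max_min_mem_Icc (hab : a ≤ b) (x : α) : max (min x b) a ∈ Icc a b :=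
  ⟨le_max_right _ _, max_le (min_le_right _ _) hab⟩

theorem max_min_eq_self {x : α} (hx : x ∈ Icc a b) : max (min x b) a = x := by
  rw [min_eq_left hx.2, max_eq_left hx.1]

theorem abs_max_min_sub_max_min_le_s11 [AddCommGroup α] [IsOrderedAddMonoid α] (x y : α) :
    |max (min x b) a - max (min y b) a| ≤ |x - y| :=
  (abs_max_sub_max_le_abs _ _ _).trans <| by
    simpa using abs_min_sub_min_le_max x b y b

end Clip

theorem abs_add_mul_le_of_mem_Icc {d m γ ξ η : ℝ} (hη : 0 ≤ η) (hηγ : η * γ ≤ 1) (hd : 0 ≤ d)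
    (hm : m ∈ Icc (-γ * d) (-ξ * d)) : |d + η * m| ≤ (1 - η * ξ) * d := by
  obtain ⟨hm_lower, hm_upper⟩ := hm
  have hno_overshoot : 0 ≤ d + η * m := by nlinarith [mul_le_mul_of_nonneg_left hm_lower hη]
  rw [abs_of_nonneg hno_overshoot]
  nlinarith [mul_le_mul_of_nonneg_left hm_upper hη]

section DualAscent

variable {K : Set ℝ} {μ : ℝ → ℝ} {γ ξ η z x : ℝ}

theorem abs_add_mul_sub_le
    (hη : 0 ≤ η) (hηγ : η * γ ≤ 1)
    (hlip : ∀ a ∈ K, ∀ b ∈ K, |μ a - μ b| ≤ γ * |a - b|)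
    (hsm : ∀ a ∈ K, ∀ b ∈ K, b ≤ a → μ a - μ b ≤ -ξ * (a - b))
    (hz : z ∈ K) (hμz : μ z = 0) (hx : x ∈ K) :
    |x + η * μ x - z| ≤ (1 - η * ξ) * |x - z| := by
  have hbound := abs_le.1 <| by simpa [hμz] using hlip x hx z hz
  rcases le_total z x with hzx | hxz
  · have hm_upper : μ x ≤ -ξ * (x - z) := by simpa [hμz] using hsm x hx z hz hzx
    rw [abs_of_nonneg (sub_nonneg.2 hzx), add_sub_right_comm]
    refine abs_add_mul_le_of_mem_Icc hη hηγ (sub_nonneg.2 hzx) ⟨?_, hm_upper⟩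
    rw [abs_of_nonneg (sub_nonneg.2 hzx)] at hbound
    linarith [hbound.1]
  · have hm_upper : -μ x ≤ -ξ * (z - x) := by linarith [hsm z hz x hx hxz]
    have hreflect : |x + η * μ x - z| = |(z - x) + η * -μ x| := by
      rw [← abs_neg]; congr 1; ring
    rw [hreflect, abs_of_nonpos (sub_nonpos.2 hxz), neg_sub]
    refine abs_add_mul_le_of_mem_Icc hη hηγ (sub_nonneg.2 hxz) ⟨?_, hm_upper⟩
    rw [abs_of_nonpos (sub_nonpos.2 hxz), neg_sub] at hbound
    linarith [hbound.2]

end DualAscent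

/-- Geometric decay of the constraint violation: under the assumptions of the
linear-rate convergence theorem, the constraint values of the dual iterates satisfy
`|μ(λ_t)| ≤ γ·(1 - η·ξ)^t·|λ₀ - λ♯|`. -/
theorem constraint_violation_linear_rate (Λ γ ξ η : ℝ) (hΛ : 0 < Λ) (hγ : 0 < γ)
    (hξ : 0 < ξ) (hη : 0 < η) (hηmin : η ≤ min (1 / γ) (1 / ξ))
    (μ : ℝ → ℝ)
    (hlip : ∀ a ∈ Set.Icc (0:ℝ) Λ, ∀ b ∈ Set.Icc (0:ℝ) Λ, |μ a - μ b| ≤ γ * |a - b|)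
    (hsm : ∀ a ∈ Set.Icc (0:ℝ) Λ, ∀ b ∈ Set.Icc (0:ℝ) Λ, b ≤ a →
      μ a - μ b ≤ -ξ * (a - b))
    (lamsharp : ℝ) (hsharp : lamsharp ∈ Set.Icc 0 Λ) (hzero : μ lamsharp = 0)
    (T : ℝ → ℝ) (hT : ∀ x, T x = max (min (x + η * μ x) Λ) 0)
    (lam : ℕ → ℝ) (hlam0 : lam 0 ∈ Set.Icc 0 Λ)
    (hstep : ∀ t, lam (t + 1) = T (lam t)) :
    ∀ t : ℕ, |μ (lam t)| ≤ γ * (1 - η * ξ) ^ t * |lam 0 - lamsharp| := by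
  have hηγ : η * γ ≤ 1 := (le_div_iff₀ hγ).1 (hηmin.trans (min_le_left _ _))
  have hηξ : η * ξ ≤ 1 := (le_div_iff₀ hξ).1 (hηmin.trans (min_le_right _ _))
  have hmem : ∀ t, lam t ∈ Icc 0 Λ := by
    rintro (_ | t)
    · exact hlam0
    · rw [hstep, hT]; exact max_min_mem_Icc hΛ.le _
  have hcontract : ∀ t, |lam (t + 1) - lamsharp| ≤ (1 - η * ξ) * |lam t - lamsharp| := by
    intro t
    calc |lam (t + 1) - lamsharp|
        = |max (min (lam t + η * μ (lam t)) Λ) 0 - max (min lamsharp Λ) 0| := by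
          rw [hstep, hT, max_min_eq_self hsharp]
      _ ≤ |lam t + η * μ (lam t) - lamsharp| := abs_max_min_sub_max_min_le_s11 _ _
      _ ≤ (1 - η * ξ) * |lam t - lamsharp| :=
          abs_add_mul_sub_le hη.le hηγ hlip hsm hsharp hzero (hmem t)
  intro t
  have hdist : |lam t - lamsharp| ≤ (1 - η * ξ) ^ t * |lam 0 - lamsharp| :=
    le_geom (u := fun k ↦ |lam k - lamsharp|) (sub_nonneg.2 hηξ) t fun k _ ↦ hcontract k
  calc |μ (lam t)| ≤ γ * |lam t - lamsharp| := by
        simpa [hzero] using hlip _ (hmem t) _ hsharp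
    _ ≤ γ * ((1 - η * ξ) ^ t * |lam 0 - lamsharp|) := mul_le_mul_of_nonneg_left hdist hγ.le
    _ = γ * (1 - η * ξ) ^ t * |lam 0 - lamsharp| := (mul_assoc _ _ _).symm
end
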